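/- Let γ > 0, m > 0, d ∈ ℕ, and Λ ⊂ ℝ^d be uniformly discrete with separation m. For 0 < η ≤ γ/2 one has sup_{ℓ ∈ Λ} Σ_{k ∈ Λ} e^{-γ|ℓ-k|}·(e^{η|ℓ-k|} - 1) ≤ C·γ^{-(d+1)}·η for a constant C depending only on d and m. -/

import Mathlib

/-!
Since `η ≤ γ / 2`, the bounds `e^{ηr} - 1 ≤ ηr e^{ηr}` and `r e^{-γr/4} ≤ 4/γ` give
`e^{-γr} (e^{ηr} - 1) ≤ (4η/γ) e^{-γr/4}`. Tile `ℝ^d` around `ℓ` by cubes of side `m / (d + 1)`: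
their diameter is less than `m`, so each contains at most one point of `Λ`, and a point `k ≠ ℓ`
in the cube with index `z ∈ ℤ^d` satisfies `m (|z|₁ + d) ≤ (d + 2)² |k - ℓ|`. The sum is thus
dominated by `(4η/γ) (∑_{j ∈ ℤ} ρ^{|j| + 1})^d` with `ρ = e^{-x}`, `x = γm / (4 (d + 2)²)`;
the extra factor `ρ` per coordinate, paid for by `|k - ℓ| ≥ m`, makes
`ρ (1 + ρ) / (1 - ρ) ≤ 2 / x`, which produces the power `γ^{-(d+1)}` for all `γ`.
-/

open Real Function

lemma exp_sub_one_le_mul_exp (x : ℝ) : exp x - 1 ≤ x * exp x := by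
  have h := mul_le_mul_of_nonneg_right (one_sub_le_exp_neg x) (exp_nonneg x)
  rw [← exp_add, neg_add_cancel, exp_zero, sub_mul, one_mul] at h
  linarith

lemma exp_neg_mul_mul_exp_sub_one_le {γ η r : ℝ} (hγ : 0 < γ) (hη : 0 ≤ η) (hηγ : η ≤ γ / 2)
    (hr : 0 ≤ r) : exp (-γ * r) * (exp (η * r) - 1) ≤ 4 * η / γ * exp (-(γ / 4) * r) := by
  have hdecay : γ / 4 * r * exp (-(γ / 4) * r) ≤ 1 := by
    rw [neg_mul]
    exact (mul_exp_neg_le_exp_neg_one _).trans (exp_le_one_iff.mpr (by norm_num))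
  calc exp (-γ * r) * (exp (η * r) - 1)
      ≤ exp (-γ * r) * (η * r * exp (η * r)) := by
        gcongr; exact exp_sub_one_le_mul_exp _
    _ = η * r * exp (-γ * r + η * r) := by rw [exp_add]; ring
    _ ≤ η * r * exp (-(γ / 4) * r + -(γ / 4) * r) :=
        mul_le_mul_of_nonneg_left (exp_le_exp.mpr (by nlinarith)) (by positivity)
    _ = 4 * η / γ * (γ / 4 * r * exp (-(γ / 4) * r)) * exp (-(γ / 4) * r) := by
        rw [exp_add]; field_simp
    _ ≤ 4 * η / γ * exp (-(γ / 4) * r) := by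
        gcongr ?_ * _
        exact mul_le_of_le_one_right (by positivity) hdecay

lemma exp_neg_mul_one_add_div_one_sub_le {x : ℝ} (hx : 0 < x) :
    exp (-x) * ((1 + exp (-x)) / (1 - exp (-x))) ≤ 2 / x := by
  have hlt : exp (-x) < 1 := exp_lt_one_iff.mpr (by linarith)
  have hpos := exp_pos (-x)
  have hmul : x * exp (-x) ≤ 1 - exp (-x) := by
    have h := mul_le_mul_of_nonneg_right (add_one_le_exp x) hpos.le
    rw [← exp_add, add_neg_cancel, exp_zero] at h
    linarith
  rw [mul_div_assoc', div_le_div_iff₀ (by linarith) hx]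
  nlinarith

lemma mul_natAbs_floor_div_le {s : ℝ} (hs : 0 < s) (u : ℝ) :
    s * (⌊u / s⌋.natAbs : ℝ) ≤ |u| + s := by
  have h1 := Int.floor_le (u / s)
  have h2 := Int.lt_floor_add_one (u / s)
  have habs : |u| / s = |u / s| := by rw [abs_div, abs_of_pos hs]
  rw [Nat.cast_natAbs, Int.cast_abs, mul_comm, ← le_div_iff₀ hs, add_div, div_self hs.ne', habs]
  rcases abs_cases ((⌊u / s⌋ : ℝ)) with ⟨h, _⟩ | ⟨h, _⟩ <;> rw [h] <;>
    cases abs_cases (u / s) <;> linarith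

lemma hasSum_pow_natAbs {ρ : ℝ} (h0 : 0 ≤ ρ) (h1 : ρ < 1) :
    HasSum (fun j : ℤ => ρ ^ j.natAbs) ((1 + ρ) / (1 - ρ)) := by
  have hg := hasSum_geometric_of_lt_one h0 h1
  have hneg : HasSum (fun n : ℕ => ρ ^ (-(n + 1 : ℤ)).natAbs) (ρ * (1 - ρ)⁻¹) :=
    (hg.mul_left ρ).congr_fun fun n => by rw [← pow_succ']; congr 1
  have h := HasSum.of_nat_of_neg_add_one (f := fun j : ℤ => ρ ^ j.natAbs) hg hneg
  rwa [← one_add_mul, ← div_eq_mul_inv] at h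

lemma ENNReal.tsum_fin_pi_prod {α : Type*} (f : α → ENNReal) (n : ℕ) :
    ∑' z : Fin n → α, ∏ i, f (z i) = (∑' a, f a) ^ n := by
  induction n with
  | zero => simp
  | succ n ih =>
    rw [← (Fin.consEquiv fun _ => α).tsum_eq, ENNReal.tsum_prod', pow_succ', ← ih,
      ← ENNReal.tsum_mul_right]
    refine tsum_congr fun a => ?_
    simp only [Fin.consEquiv, Equiv.coe_fn_mk, Fin.prod_univ_succ, Fin.cons_zero, Fin.cons_succ,
      ENNReal.tsum_mul_left]

lemma tsum_le_mul_pow_of_le_prod_comp_injective {ι α : Type*} {n : ℕ} {T : ι → ℝ}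
    (hT0 : ∀ k, 0 ≤ T k) {φ : ι → Fin n → α} (hφ : Injective φ) {f : α → ℝ} (hf0 : ∀ a, 0 ≤ f a)
    {a c : ℝ} (hf : HasSum f a) (hc : 0 ≤ c) (hT : ∀ k, T k ≤ c * ∏ i, f (φ k i)) :
    ∑' k, T k ≤ c * a ^ n := by
  have ha : 0 ≤ a := hf.nonneg hf0
  have key : ∑' k, ENNReal.ofReal (T k) ≤ ENNReal.ofReal (c * a ^ n) := calc
    ∑' k, ENNReal.ofReal (T k)
      ≤ ∑' k, ENNReal.ofReal c * ∏ i, ENNReal.ofReal (f (φ k i)) := by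
        refine ENNReal.tsum_le_tsum fun k => (ENNReal.ofReal_le_ofReal (hT k)).trans_eq ?_
        rw [ENNReal.ofReal_mul hc, ENNReal.ofReal_prod_of_nonneg fun i _ => hf0 _]
    _ ≤ ∑' z : Fin n → α, ENNReal.ofReal c * ∏ i, ENNReal.ofReal (f (z i)) :=
        ENNReal.tsum_comp_le_tsum_of_injective hφ fun z => _
    _ = ENNReal.ofReal (c * a ^ n) := by
        rw [ENNReal.tsum_mul_left, ENNReal.tsum_fin_pi_prod (fun x => ENNReal.ofReal (f x)),
          ← ENNReal.ofReal_tsum_of_nonneg hf0 hf.summable,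
          hf.tsum_eq, ← ENNReal.ofReal_pow ha, ← ENNReal.ofReal_mul hc]
  by_cases hs : Summable T
  · rwa [← ENNReal.ofReal_tsum_of_nonneg hT0 hs,
      ENNReal.ofReal_le_ofReal_iff (by positivity)] at key
  · rw [tsum_eq_zero_of_not_summable hs]; positivity

section Cubes

variable {d : ℕ}

noncomputable def cubeIndex (s : ℝ) (x : EuclideanSpace ℝ (Fin d)) : Fin d → ℤ := fun i => ⌊x i / s⌋

lemma dist_sq_le_of_cubeIndex_eq {s : ℝ} (hs : 0 < s) {x y : EuclideanSpace ℝ (Fin d)}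
    (h : cubeIndex s x = cubeIndex s y) : dist x y ^ 2 ≤ d * s ^ 2 := by
  rw [EuclideanSpace.dist_eq, sq_sqrt (by positivity)]
  calc ∑ i, dist (x i) (y i) ^ 2 ≤ ∑ _i : Fin d, s ^ 2 := by
        gcongr with i
        have h' := Int.abs_sub_lt_one_of_floor_eq_floor (congrFun h i)
        rw [← sub_div, abs_div, abs_of_pos hs, div_lt_one hs, ← Real.dist_eq] at h'
        exact h'.le
    _ = d * s ^ 2 := by simp

lemma injective_cubeIndex_sub {m : ℝ} (hm : 0 < m) {Λ : Set (EuclideanSpace ℝ (Fin d))}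
    (hsep : ∀ x ∈ Λ, ∀ y ∈ Λ, x ≠ y → m ≤ dist x y) (c : EuclideanSpace ℝ (Fin d)) :
    Injective fun k : Λ => cubeIndex (m / (d + 1)) ((k : EuclideanSpace ℝ (Fin d)) - c) := by
  intro k k' h
  by_contra hne
  have hsq := dist_sq_le_of_cubeIndex_eq (by positivity) h
  rw [dist_sub_right] at hsq
  have hmk := pow_le_pow_left₀ hm.le (hsep k k.2 k' k'.2 (Subtype.coe_injective.ne hne)) 2
  have hd : (d : ℝ) * (m / (d + 1)) ^ 2 < m ^ 2 := by
    rw [div_pow, mul_div_assoc', div_lt_iff₀ (by positivity)]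
    nlinarith [mul_pos (sq_pos_of_pos hm) (by nlinarith : (0 : ℝ) < (d + 1) ^ 2 - d)]
  linarith

lemma mul_sum_natAbs_cubeIndex_le {s : ℝ} (hs : 0 < s) (t : EuclideanSpace ℝ (Fin d)) :
    s * ∑ i, ((cubeIndex s t i).natAbs : ℝ) ≤ d * (‖t‖ + s) := by
  rw [Finset.mul_sum]
  calc ∑ i, s * ((cubeIndex s t i).natAbs : ℝ) ≤ ∑ _i : Fin d, (‖t‖ + s) := by
        gcongr with i
        refine (mul_natAbs_floor_div_le hs _).trans ?_
        gcongr
        exact PiLp.norm_apply_le t i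
    _ = d * (‖t‖ + s) := by simp [mul_add]

lemma mul_sum_natAbs_cubeIndex_add_one_le {m : ℝ} (hm : 0 < m) {t : EuclideanSpace ℝ (Fin d)}
    (ht : m ≤ ‖t‖) :
    m * ∑ i, ((cubeIndex (m / (d + 1)) t i).natAbs + 1 : ℝ) ≤ (d + 2) ^ 2 * ‖t‖ := by
  have hd : (0 : ℝ) ≤ d := Nat.cast_nonneg d
  have h := mul_sum_natAbs_cubeIndex_le (d := d) (by positivity : 0 < m / (d + 1)) t
  rw [div_mul_eq_mul_div, div_le_iff₀ (by positivity),
    show d * (‖t‖ + m / (d + 1)) * (d + 1) = d * (d + 1) * ‖t‖ + d * m by field_simp] at h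
  rw [Finset.sum_add_distrib]
  simp only [Finset.sum_const, Finset.card_univ, Fintype.card_fin, nsmul_eq_mul, mul_one]
  nlinarith [mul_le_mul_of_nonneg_left ht hd, norm_nonneg t]

lemma exp_neg_mul_norm_le_prod_cubeIndex {β m : ℝ} (hβ : 0 ≤ β) (hm : 0 < m)
    {t : EuclideanSpace ℝ (Fin d)} (ht : m ≤ ‖t‖) :
    exp (-β * ‖t‖) ≤
      ∏ i, exp (-(β * m / (d + 2) ^ 2)) ^ ((cubeIndex (m / (d + 1)) t i).natAbs + 1) := by
  simp_rw [← exp_nat_mul, ← exp_sum]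
  apply exp_le_exp.mpr
  have h := mul_sum_natAbs_cubeIndex_add_one_le hm ht
  have hd : (0 : ℝ) < (d + 2) ^ 2 := by positivity
  rw [← Finset.sum_mul]
  push_cast
  rw [neg_mul, mul_neg, neg_le_neg_iff, show ∀ S : ℝ, S * (β * m / (d + 2) ^ 2) =
    β * (m * S) / (d + 2) ^ 2 by intro S; ring, div_le_iff₀ hd]
  nlinarith [mul_le_mul_of_nonneg_left h hβ]

lemma exp_neg_mul_dist_mul_exp_sub_one_le_prod {γ η m : ℝ} (hγ : 0 < γ) (hη : 0 ≤ η)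
    (hηγ : η ≤ γ / 2) (hm : 0 < m) {ℓ k : EuclideanSpace ℝ (Fin d)}
    (hk : k ≠ ℓ → m ≤ dist ℓ k) :
    exp (-γ * dist ℓ k) * (exp (η * dist ℓ k) - 1) ≤
      4 * η / γ * ∏ i, exp (-(γ / 4 * m / (d + 2) ^ 2)) ^
        ((cubeIndex (m / (d + 1)) (k - ℓ) i).natAbs + 1) := by
  by_cases hkℓ : k = ℓ
  · simp only [hkℓ, dist_self, mul_zero, exp_zero, sub_self]
    positivity
  have hmk := hk hkℓ
  rw [dist_comm, dist_eq_norm] at hmk ⊢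
  calc _ ≤ 4 * η / γ * exp (-(γ / 4) * ‖k - ℓ‖) :=
        exp_neg_mul_mul_exp_sub_one_le hγ hη hηγ (norm_nonneg _)
    _ ≤ _ := by
        gcongr
        exact exp_neg_mul_norm_le_prod_cubeIndex (by positivity) hm hmk

end Cubes

/-- Key quantitative estimate in the Combes-Thomas proof: the exponentially tilted
kernel differs from the original by a term linear in the tilt parameter `η`. -/
theorem combes_thomas_tilt_estimate (d : ℕ) (m : ℝ) (hm : 0 < m) :
    ∃ C : ℝ, 0 < C ∧
      ∀ (γ η : ℝ), 0 < γ → 0 < η → η ≤ γ / 2 →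
        ∀ (Λ : Set (EuclideanSpace ℝ (Fin d))),
          (∀ x ∈ Λ, ∀ y ∈ Λ, x ≠ y → m ≤ dist x y) →
          ∀ ℓ ∈ Λ,
            ∑' k : Λ,
                Real.exp (-γ * dist ℓ (k : EuclideanSpace ℝ (Fin d))) *
                  (Real.exp (η * dist ℓ (k : EuclideanSpace ℝ (Fin d))) - 1)
              ≤ C * γ ^ (-((d : ℝ) + 1)) * η := by
  refine ⟨4 * (8 * (d + 2) ^ 2 / m) ^ d, by positivity, ?_⟩
  intro γ η hγ hη hηγ Λ hsep ℓ hℓ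
  set x := γ / 4 * m / (d + 2) ^ 2 with hx
  have hx0 : 0 < x := by positivity
  have hρ : exp (-x) < 1 := exp_lt_one_iff.mpr (neg_lt_zero.mpr hx0)
  have hterm (k : Λ) := exp_neg_mul_dist_mul_exp_sub_one_le_prod hγ hη.le hηγ hm
    fun hk => hsep _ hℓ _ k.2 (Ne.symm hk)
  have hsum : HasSum (fun j : ℤ => exp (-x) ^ (j.natAbs + 1))
      (exp (-x) * ((1 + exp (-x)) / (1 - exp (-x)))) :=
    ((hasSum_pow_natAbs (exp_nonneg _) hρ).mul_left _).congr_fun fun j => pow_succ' _ _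
  calc _ ≤ 4 * η / γ * (exp (-x) * ((1 + exp (-x)) / (1 - exp (-x)))) ^ d :=
        tsum_le_mul_pow_of_le_prod_comp_injective
          (fun k => mul_nonneg (exp_nonneg _) (sub_nonneg.mpr (one_le_exp (by positivity))))
          (injective_cubeIndex_sub hm hsep ℓ) (fun _ => by positivity) hsum (by positivity) hterm
    _ ≤ 4 * η / γ * (2 / x) ^ d := by
        gcongr
        exact exp_neg_mul_one_add_div_one_sub_le hx0
    _ = 4 * (8 * (d + 2) ^ 2 / m) ^ d * γ ^ (-((d : ℝ) + 1)) * η := by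
        rw [show -((d : ℝ) + 1) = -((d + 1 : ℕ) : ℝ) by push_cast; ring, rpow_neg hγ.le,
          rpow_natCast, show 2 / x = 8 * (d + 2) ^ 2 / m / γ by rw [hx]; field_simp; ring, div_pow]
        field_simp
        ring
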